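/- Let n, b, m be positive integers, let x be a real n×b matrix, let W be a real m×n matrix, let G be a real m×b matrix, let η be a real number, and let λ > 0. Define the activation proposal z* = W·x − η·b·G. Then ΔW* = −η · G · xᵀ · (x·xᵀ/b + λ·Iₙ)⁻¹ is a global minimizer over ΔW ∈ ℝ^{m×n} of the original TrAct objective ‖z* − (W + ΔW)·x‖_F² + λ·b·‖ΔW‖_F². -/

import Mathlib

open Matrix

/-- Squared Frobenius norm of a real matrix. -/
noncomputable def frobSq {k l : ℕ} (A : Matrix (Fin k) (Fin l) ℝ) : ℝ :=
  ∑ i, ∑ j, (A i j) ^ 2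

noncomputable def dotF {k l : ℕ} (A B : Matrix (Fin k) (Fin l) ℝ) : ℝ :=
  ∑ i, ∑ j, A i j * B i j

lemma frobSq_nonneg {k l : ℕ} (A : Matrix (Fin k) (Fin l) ℝ) : 0 ≤ frobSq A := by
  unfold frobSq
  positivity

lemma frobSq_neg {k l : ℕ} (A : Matrix (Fin k) (Fin l) ℝ) : frobSq (-A) = frobSq A := by
  simp [frobSq]

lemma frobSq_add {k l : ℕ} (A B : Matrix (Fin k) (Fin l) ℝ) :
    frobSq (A + B) = frobSq A + 2 * dotF A B + frobSq B := by
  simp only [frobSq, dotF, Matrix.add_apply, Finset.mul_sum, ← Finset.sum_add_distrib]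
  exact Finset.sum_congr rfl fun i _ => Finset.sum_congr rfl fun j _ => by ring

lemma dotF_add_left {k l : ℕ} (A B C : Matrix (Fin k) (Fin l) ℝ) :
    dotF (A + B) C = dotF A C + dotF B C := by
  simp only [dotF, Matrix.add_apply, add_mul, ← Finset.sum_add_distrib]

lemma dotF_smul_left {k l : ℕ} (r : ℝ) (A B : Matrix (Fin k) (Fin l) ℝ) :
    dotF (r • A) B = r * dotF A B := by
  simp only [dotF, Matrix.smul_apply, smul_eq_mul, Finset.mul_sum, mul_assoc]

lemma dotF_zero_left {k l : ℕ} (B : Matrix (Fin k) (Fin l) ℝ) : dotF 0 B = 0 := by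
  simp [dotF]

lemma dotF_mul_right {n b m : ℕ} (P : Matrix (Fin m) (Fin b) ℝ)
    (D : Matrix (Fin m) (Fin n) ℝ) (x : Matrix (Fin n) (Fin b) ℝ) :
    dotF P (D * x) = dotF (P * xᵀ) D := by
  unfold dotF
  simp only [Matrix.mul_apply, Matrix.transpose_apply, Finset.mul_sum, Finset.sum_mul]
  refine Finset.sum_congr rfl fun i _ => ?_
  rw [Finset.sum_comm]
  exact Finset.sum_congr rfl fun k _ => Finset.sum_congr rfl fun j _ => by ring

/-- With the activation proposal `z* = W·x − η·b·G`, the TrAct update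
`ΔW* = −η · G · xᵀ · (x·xᵀ/b + λ·Iₙ)⁻¹` globally minimizes the original TrAct objective
`‖z* − (W + ΔW)·x‖_F² + λ·b·‖ΔW‖_F²` over `ΔW`. -/
theorem tract_original_objective_global_min
    (n b m : ℕ) (hn : 0 < n) (hb : 0 < b) (hm : 0 < m)
    (x : Matrix (Fin n) (Fin b) ℝ) (W : Matrix (Fin m) (Fin n) ℝ)
    (G : Matrix (Fin m) (Fin b) ℝ) (η lam : ℝ) (hlam : 0 < lam)
    (zstar : Matrix (Fin m) (Fin b) ℝ) (hzstar : zstar = W * x - (η * (b : ℝ)) • G)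
    (ΔWstar : Matrix (Fin m) (Fin n) ℝ)
    (hΔWstar : ΔWstar =
      (-η) • (G * xᵀ * ((b : ℝ)⁻¹ • (x * xᵀ) + lam • (1 : Matrix (Fin n) (Fin n) ℝ))⁻¹)) :
    ∀ ΔW : Matrix (Fin m) (Fin n) ℝ,
      frobSq (zstar - (W + ΔWstar) * x) + lam * (b : ℝ) * frobSq ΔWstar ≤
        frobSq (zstar - (W + ΔW) * x) + lam * (b : ℝ) * frobSq ΔW := by
  intro ΔW
  have hb0 : (0:ℝ) < (b:ℝ) := by exact_mod_cast hb
  set M : Matrix (Fin n) (Fin n) ℝ :=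
    (b : ℝ)⁻¹ • (x * xᵀ) + lam • (1 : Matrix (Fin n) (Fin n) ℝ) with hM
  -- M is positive definite, hence invertible
  have hMpd : M.PosDef := by
    have hxx : (x * xᵀ).PosSemidef := by
      have := Matrix.posSemidef_self_mul_conjTranspose x
      simpa using this
    have hsemi : ((b : ℝ)⁻¹ • (x * xᵀ)).PosSemidef := by
      refine ⟨?_, fun v => ?_⟩
      · have h1 : (x * xᵀ)ᴴ = x * xᵀ := hxx.1
        simp [Matrix.IsHermitian, Matrix.conjTranspose_smul, h1]
      · have h2 := hxx.2 v
        exact (hxx.smul (a := (b:ℝ)⁻¹) (by positivity)).2 v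
    have hId : ((lam) • (1 : Matrix (Fin n) (Fin n) ℝ)).PosDef := by
      refine ⟨?_, fun v hv => ?_⟩
      · simp [Matrix.IsHermitian, Matrix.conjTranspose_smul]
      · exact ((Matrix.PosDef.one (n := Fin n) (R := ℝ)).smul hlam).2 hv
    exact Matrix.PosDef.posSemidef_add hsemi hId
  have hdet : IsUnit M.det := isUnit_iff_ne_zero.mpr (ne_of_gt hMpd.det_pos)
  have hinv : M⁻¹ * M = 1 := Matrix.nonsing_inv_mul M hdet
  -- normal equation
  have hbM : x * xᵀ + (lam * (b:ℝ)) • (1 : Matrix (Fin n) (Fin n) ℝ) = (b:ℝ) • M := by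
    rw [hM, smul_add, smul_smul, smul_smul, mul_inv_cancel₀ (ne_of_gt hb0), one_smul,
      mul_comm lam ((b:ℝ))]
  have hnormal : ΔWstar * (x * xᵀ + (lam * (b:ℝ)) • (1 : Matrix (Fin n) (Fin n) ℝ))
      = (-(η * (b:ℝ))) • (G * xᵀ) := by
    rw [hbM, hΔWstar, Matrix.smul_mul, Matrix.mul_smul, Matrix.mul_assoc, hinv,
      Matrix.mul_one, smul_smul]
    ring_nf
  set c : Matrix (Fin m) (Fin b) ℝ := (η * (b:ℝ)) • G with hc
  set D : Matrix (Fin m) (Fin n) ℝ := ΔW - ΔWstar with hD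
  set R : Matrix (Fin m) (Fin b) ℝ := c + ΔWstar * x with hR
  -- the "gradient" vanishes at ΔWstar
  have hgrad : R * xᵀ + (lam * (b:ℝ)) • ΔWstar = 0 := by
    have h1 : R * xᵀ = c * xᵀ + ΔWstar * (x * xᵀ) := by
      rw [hR, Matrix.add_mul, Matrix.mul_assoc]
    have h2 : (lam * (b:ℝ)) • ΔWstar
        = ΔWstar * ((lam * (b:ℝ)) • (1 : Matrix (Fin n) (Fin n) ℝ)) := by
      rw [Matrix.mul_smul, Matrix.mul_one]
    rw [h1, h2, add_assoc, ← Matrix.mul_add, hnormal, hc, Matrix.smul_mul]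
    simp [← add_smul]
  -- rewrite residuals
  have hres : ∀ Δ : Matrix (Fin m) (Fin n) ℝ,
      zstar - (W + Δ) * x = -(c + Δ * x) := by
    intro Δ
    rw [hzstar, hc, Matrix.add_mul]
    abel
  have hfr : ∀ Δ : Matrix (Fin m) (Fin n) ℝ,
      frobSq (zstar - (W + Δ) * x) = frobSq (c + Δ * x) := by
    intro Δ; rw [hres, frobSq_neg]
  rw [hfr ΔWstar, hfr ΔW]
  -- decompose ΔW = ΔWstar + D
  have hΔW : ΔW = ΔWstar + D := by rw [hD]; abel
  have hcx : c + ΔW * x = R + D * x := by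
    rw [hΔW, Matrix.add_mul, hR]; abel
  rw [hcx, hΔW, frobSq_add, frobSq_add]
  have hcross : dotF R (D * x) + lam * (b:ℝ) * dotF ΔWstar D = 0 := by
    have := dotF_add_left (R * xᵀ) ((lam * (b:ℝ)) • ΔWstar) D
    rw [hgrad, dotF_zero_left, dotF_smul_left] at this
    rw [dotF_mul_right]
    linarith
  have e1 : frobSq R = frobSq c + 2 * dotF c (ΔWstar * x) + frobSq (ΔWstar * x) := by
    rw [hR]; exact frobSq_add _ _
  have e2 : frobSq (ΔWstar + D) = frobSq ΔWstar + 2 * dotF ΔWstar D + frobSq D :=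
    frobSq_add _ _
  have h1 : 0 ≤ frobSq (D * x) := frobSq_nonneg _
  have h2 : 0 ≤ frobSq D := frobSq_nonneg _
  have hlb : 0 ≤ lam * (b:ℝ) := by positivity
  nlinarith [mul_nonneg hlb h2]
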